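/- arXiv:1312.4028 — 8 statements merged into one kernel-verified Lean document; each statement's English description precedes it below -/
import Mathlib

section
/- In a 7-dimensional algebra from the class TLb_7 with adapted basis e_0,...,e_6 and brackets as in the defining multiplication table (with parameters b_{00}, b_{01}, b_{11}, a_{14}, a_{15}, a_{25}, b_{12}, b_{13}, b_{14}, b_{23}, b_{15}, b_{24}), the Leibniz identity applied to the triple (e_0, e_1, e_2) forces b_{13} = a_{15}. -/
theorem Module.Basis.coord_smul_add_smul {ι R M : Type*} [CommSemiring R] [AddCommMonoid M]
    [Module R M] (e : Module.Basis ι R M) {i j : ι} (hij : i ≠ j) (x y : R) :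
    e.coord j (x • e i + y • e j) = y := by
  simp [Module.Basis.coord_apply, hij]

theorem TLb7_leibniz_e0e1e2_general {L : Type*} [AddCommGroup L] [Module ℂ L]
    (B : L →ₗ[ℂ] L →ₗ[ℂ] L) (e : Module.Basis (Fin 7) ℂ L)
    (b01 a14 a15 b12 b13 : ℂ)
    (h02 : B (e 0) (e 2) = -(e 3))
    (h04 : B (e 0) (e 4) = -(e 5))
    (h05 : B (e 0) (e 5) = -(e 6))
    (h01 : B (e 0) (e 1) = -(e 2) + b01 • e 6)
    (h12 : B (e 1) (e 2) = a14 • e 4 + a15 • e 5 + b12 • e 6)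
    (h31 : B (e 3) (e 1) = -(a14 • e 5 + b13 • e 6))
    (h22 : B (e 2) (e 2) = 0)
    (h6 : ∀ j : Fin 7, B (e 6) (e j) = 0 ∧ B (e j) (e 6) = 0)
    (hleib : B (e 0) (B (e 1) (e 2)) = B (B (e 0) (e 1)) (e 2) - B (B (e 0) (e 2)) (e 1)) :
    b13 = a15 := by
  have hlhs : B (e 0) (B (e 1) (e 2)) = (-a14) • e 5 + (-a15) • e 6 := by
    simp [h12, h04, h05, (h6 0).2]
  have hrhs : B (B (e 0) (e 1)) (e 2) - B (B (e 0) (e 2)) (e 1) = (-a14) • e 5 + (-b13) • e 6 := by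
    simp only [h01, h02, h22, h31, (h6 2).1, map_add, map_neg, map_smul, LinearMap.add_apply,
      LinearMap.neg_apply, LinearMap.smul_apply, smul_zero, neg_zero, zero_add, neg_neg]
    module
  have hcoord := congrArg (e.coord 6) (hlhs.symm.trans (hleib.trans hrhs))
  rw [e.coord_smul_add_smul (by decide), e.coord_smul_add_smul (by decide)] at hcoord
  exact (neg_inj.mp hcoord).symm

/-- In an algebra from TLb₇ (multiplication table as in the paper), the Leibniz
identity applied to the triple (e₀,e₁,e₂) forces b₁₃ = a₁₅. -/
theorem TLb7_leibniz_e0e1e2 {L : Type*} [AddCommGroup L] [Module ℂ L]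
    (B : L →ₗ[ℂ] L →ₗ[ℂ] L) (e : Module.Basis (Fin 7) ℂ L)
    (b00 b01 b11 a14 a15 a25 b12 b13 b14 b23 b15 b24 : ℂ)
    (h10 : B (e 1) (e 0) = e 2)
    (h20 : B (e 2) (e 0) = e 3)
    (h30 : B (e 3) (e 0) = e 4)
    (h40 : B (e 4) (e 0) = e 5)
    (h50 : B (e 5) (e 0) = e 6)
    (h02 : B (e 0) (e 2) = -(e 3))
    (h03 : B (e 0) (e 3) = -(e 4))
    (h04 : B (e 0) (e 4) = -(e 5))
    (h05 : B (e 0) (e 5) = -(e 6))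
    (h00 : B (e 0) (e 0) = b00 • e 6)
    (h01 : B (e 0) (e 1) = -(e 2) + b01 • e 6)
    (h11 : B (e 1) (e 1) = b11 • e 6)
    (h12 : B (e 1) (e 2) = a14 • e 4 + a15 • e 5 + b12 • e 6)
    (h21 : B (e 2) (e 1) = -(a14 • e 4 + a15 • e 5 + b12 • e 6))
    (h13 : B (e 1) (e 3) = a14 • e 5 + b13 • e 6)
    (h31 : B (e 3) (e 1) = -(a14 • e 5 + b13 • e 6))
    (h14 : B (e 1) (e 4) = (-a25) • e 5 + b14 • e 6)
    (h41 : B (e 4) (e 1) = -((-a25) • e 5 + b14 • e 6))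
    (h23 : B (e 2) (e 3) = a25 • e 5 + b23 • e 6)
    (h32 : B (e 3) (e 2) = -(a25 • e 5 + b23 • e 6))
    (h15 : B (e 1) (e 5) = b15 • e 6)
    (h51 : B (e 5) (e 1) = -(b15 • e 6))
    (h24 : B (e 2) (e 4) = b24 • e 6)
    (h42 : B (e 4) (e 2) = -(b24 • e 6))
    (h22 : B (e 2) (e 2) = 0) (h33 : B (e 3) (e 3) = 0)
    (h44 : B (e 4) (e 4) = 0) (h55 : B (e 5) (e 5) = 0)
    (h25 : B (e 2) (e 5) = 0) (h52 : B (e 5) (e 2) = 0)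
    (h34 : B (e 3) (e 4) = 0) (h43 : B (e 4) (e 3) = 0)
    (h35 : B (e 3) (e 5) = 0) (h53 : B (e 5) (e 3) = 0)
    (h45 : B (e 4) (e 5) = 0) (h54 : B (e 5) (e 4) = 0)
    (h6 : ∀ j : Fin 7, B (e 6) (e j) = 0 ∧ B (e j) (e 6) = 0)
    (hleib : B (e 0) (B (e 1) (e 2)) = B (B (e 0) (e 1)) (e 2) - B (B (e 0) (e 2)) (e 1)) :
    b13 = a15 :=
  TLb7_leibniz_e0e1e2_general B e b01 a14 a15 b12 b13 h02 h04 h05 h01 h12 h31 h22 h6 hleib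
end

section
/- In a 7-dimensional algebra from the class TLb_7 (multiplication table as defined), if the Leibniz identity holds for all triples of basis vectors, then b_{13} = a_{15}, b_{14} = a_{14} - b_{23}, and b_{15} = b_{24} = a_{25} = 0. -/
/-!
Only the `e₆`-coefficients of five instances of the Leibniz identity are needed.
The triples `(e₀,e₁,e₂)`, `(e₀,e₁,e₃)`, `(e₀,e₂,e₃)` and `(e₀,e₁,e₄)` give the linear relations
`b₁₃ = a₁₅`, `b₁₄ = a₁₄ - b₂₃`, `b₂₄ = a₂₅` and `a₂₅ + b₂₄ + b₁₅ = 0`, so `b₁₅ = -2 a₂₅`.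
The triple `(e₁,e₂,e₃)` gives the quadratic relation `a₂₅ b₁₅ = 0`, hence `a₂₅² = 0`.
-/

namespace TLb7

variable {R L : Type*} [CommRing R] [AddCommGroup L] [Module R L]
  {B : L →ₗ[R] L →ₗ[R] L} {e : Module.Basis (Fin 7) R L}

theorem b13_eq_a15 {a14 a15 b01 b12 b13 : R}
    (h01 : B (e 0) (e 1) = -(e 2) + b01 • e 6)
    (h02 : B (e 0) (e 2) = -(e 3))
    (h04 : B (e 0) (e 4) = -(e 5))
    (h05 : B (e 0) (e 5) = -(e 6))
    (h12 : B (e 1) (e 2) = a14 • e 4 + a15 • e 5 + b12 • e 6)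
    (h22 : B (e 2) (e 2) = 0)
    (h31 : B (e 3) (e 1) = -(a14 • e 5 + b13 • e 6))
    (h6 : ∀ j : Fin 7, B (e 6) (e j) = 0 ∧ B (e j) (e 6) = 0)
    (hleib : B (e 0) (B (e 1) (e 2)) = B (B (e 0) (e 1)) (e 2) - B (B (e 0) (e 2)) (e 1)) :
    b13 = a15 := by
  have := congrArg (e.coord 6) hleib
  simp [h01, h02, h04, h05, h12, h22, h31, (h6 _).1, (h6 _).2] at this
  exact this.symm

theorem b14_eq_a14_sub_b23 {a14 a25 b01 b13 b14 b23 : R}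
    (h01 : B (e 0) (e 1) = -(e 2) + b01 • e 6)
    (h03 : B (e 0) (e 3) = -(e 4))
    (h05 : B (e 0) (e 5) = -(e 6))
    (h13 : B (e 1) (e 3) = a14 • e 5 + b13 • e 6)
    (h23 : B (e 2) (e 3) = a25 • e 5 + b23 • e 6)
    (h41 : B (e 4) (e 1) = -((-a25) • e 5 + b14 • e 6))
    (h6 : ∀ j : Fin 7, B (e 6) (e j) = 0 ∧ B (e j) (e 6) = 0)
    (hleib : B (e 0) (B (e 1) (e 3)) = B (B (e 0) (e 1)) (e 3) - B (B (e 0) (e 3)) (e 1)) :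
    b14 = a14 - b23 := by
  have := congrArg (e.coord 6) hleib
  simp [h01, h03, h05, h13, h23, h41, (h6 _).1, (h6 _).2] at this
  linear_combination this

theorem b24_eq_a25 {a25 b23 b24 : R}
    (h02 : B (e 0) (e 2) = -(e 3))
    (h03 : B (e 0) (e 3) = -(e 4))
    (h05 : B (e 0) (e 5) = -(e 6))
    (h23 : B (e 2) (e 3) = a25 • e 5 + b23 • e 6)
    (h33 : B (e 3) (e 3) = 0)
    (h42 : B (e 4) (e 2) = -(b24 • e 6))
    (h6 : ∀ j : Fin 7, B (e 6) (e j) = 0 ∧ B (e j) (e 6) = 0)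
    (hleib : B (e 0) (B (e 2) (e 3)) = B (B (e 0) (e 2)) (e 3) - B (B (e 0) (e 3)) (e 2)) :
    b24 = a25 := by
  have := congrArg (e.coord 6) hleib
  simp [h02, h03, h05, h23, h33, h42, (h6 _).2] at this
  linear_combination -this

theorem a25_add_b24_add_b15_eq_zero {a25 b01 b14 b15 b24 : R}
    (h01 : B (e 0) (e 1) = -(e 2) + b01 • e 6)
    (h04 : B (e 0) (e 4) = -(e 5))
    (h05 : B (e 0) (e 5) = -(e 6))
    (h14 : B (e 1) (e 4) = (-a25) • e 5 + b14 • e 6)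
    (h24 : B (e 2) (e 4) = b24 • e 6)
    (h51 : B (e 5) (e 1) = -(b15 • e 6))
    (h6 : ∀ j : Fin 7, B (e 6) (e j) = 0 ∧ B (e j) (e 6) = 0)
    (hleib : B (e 0) (B (e 1) (e 4)) = B (B (e 0) (e 1)) (e 4) - B (B (e 0) (e 4)) (e 1)) :
    a25 + b24 + b15 = 0 := by
  have := congrArg (e.coord 6) hleib
  simp [h01, h04, h05, h14, h24, h51, (h6 _).1, (h6 _).2] at this
  linear_combination this

theorem a25_mul_b15_eq_zero {a14 a15 a25 b12 b13 b15 b23 : R}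
    (h12 : B (e 1) (e 2) = a14 • e 4 + a15 • e 5 + b12 • e 6)
    (h13 : B (e 1) (e 3) = a14 • e 5 + b13 • e 6)
    (h15 : B (e 1) (e 5) = b15 • e 6)
    (h23 : B (e 2) (e 3) = a25 • e 5 + b23 • e 6)
    (h43 : B (e 4) (e 3) = 0) (h52 : B (e 5) (e 2) = 0) (h53 : B (e 5) (e 3) = 0)
    (h6 : ∀ j : Fin 7, B (e 6) (e j) = 0 ∧ B (e j) (e 6) = 0)
    (hleib : B (e 1) (B (e 2) (e 3)) = B (B (e 1) (e 2)) (e 3) - B (B (e 1) (e 3)) (e 2)) :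
    a25 * b15 = 0 := by
  have := congrArg (e.coord 6) hleib
  simp [h12, h13, h15, h23, h43, h52, h53, (h6 _).1, (h6 _).2] at this
  linear_combination this

end TLb7

theorem TLb7_constraints_general {L : Type*} [AddCommGroup L] [Module ℂ L]
    (B : L →ₗ[ℂ] L →ₗ[ℂ] L) (e : Module.Basis (Fin 7) ℂ L)
    (b01 a14 a15 a25 b12 b13 b14 b23 b15 b24 : ℂ)
    (h02 : B (e 0) (e 2) = -(e 3))
    (h03 : B (e 0) (e 3) = -(e 4))
    (h04 : B (e 0) (e 4) = -(e 5))
    (h05 : B (e 0) (e 5) = -(e 6))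
    (h01 : B (e 0) (e 1) = -(e 2) + b01 • e 6)
    (h12 : B (e 1) (e 2) = a14 • e 4 + a15 • e 5 + b12 • e 6)
    (h13 : B (e 1) (e 3) = a14 • e 5 + b13 • e 6)
    (h31 : B (e 3) (e 1) = -(a14 • e 5 + b13 • e 6))
    (h14 : B (e 1) (e 4) = (-a25) • e 5 + b14 • e 6)
    (h41 : B (e 4) (e 1) = -((-a25) • e 5 + b14 • e 6))
    (h23 : B (e 2) (e 3) = a25 • e 5 + b23 • e 6)
    (h15 : B (e 1) (e 5) = b15 • e 6)
    (h51 : B (e 5) (e 1) = -(b15 • e 6))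
    (h24 : B (e 2) (e 4) = b24 • e 6)
    (h42 : B (e 4) (e 2) = -(b24 • e 6))
    (h22 : B (e 2) (e 2) = 0) (h33 : B (e 3) (e 3) = 0)
    (h52 : B (e 5) (e 2) = 0)
    (h43 : B (e 4) (e 3) = 0)
    (h53 : B (e 5) (e 3) = 0)
    (h6 : ∀ j : Fin 7, B (e 6) (e j) = 0 ∧ B (e j) (e 6) = 0)
    (hleib : ∀ i j k : Fin 7,
      B (e i) (B (e j) (e k)) = B (B (e i) (e j)) (e k) - B (B (e i) (e k)) (e j)) :
    b13 = a15 ∧ b14 = a14 - b23 ∧ b15 = 0 ∧ b24 = 0 ∧ a25 = 0 := by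
  have hb24 := TLb7.b24_eq_a25 h02 h03 h05 h23 h33 h42 h6 (hleib 0 2 3)
  have hsum := TLb7.a25_add_b24_add_b15_eq_zero h01 h04 h05 h14 h24 h51 h6 (hleib 0 1 4)
  have hprod := TLb7.a25_mul_b15_eq_zero h12 h13 h15 h23 h43 h52 h53 h6 (hleib 1 2 3)
  have ha25 : a25 = 0 := by
    have : a25 * a25 = 0 := by linear_combination a25 / 2 * (hsum - hb24) - hprod / 2
    exact mul_self_eq_zero.mp this
  refine ⟨TLb7.b13_eq_a15 h01 h02 h04 h05 h12 h22 h31 h6 (hleib 0 1 2),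
    TLb7.b14_eq_a14_sub_b23 h01 h03 h05 h13 h23 h41 h6 (hleib 0 1 3), ?_, by rw [hb24, ha25], ha25⟩
  linear_combination hsum - hb24 - 2 * ha25

/-- In an algebra from TLb₇, if the Leibniz identity holds for all triples of
basis vectors, then b₁₃ = a₁₅, b₁₄ = a₁₄ - b₂₃ and b₁₅ = b₂₄ = a₂₅ = 0. -/
theorem TLb7_constraints {L : Type*} [AddCommGroup L] [Module ℂ L]
    (B : L →ₗ[ℂ] L →ₗ[ℂ] L) (e : Module.Basis (Fin 7) ℂ L)
    (b00 b01 b11 a14 a15 a25 b12 b13 b14 b23 b15 b24 : ℂ)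
    (h10 : B (e 1) (e 0) = e 2)
    (h20 : B (e 2) (e 0) = e 3)
    (h30 : B (e 3) (e 0) = e 4)
    (h40 : B (e 4) (e 0) = e 5)
    (h50 : B (e 5) (e 0) = e 6)
    (h02 : B (e 0) (e 2) = -(e 3))
    (h03 : B (e 0) (e 3) = -(e 4))
    (h04 : B (e 0) (e 4) = -(e 5))
    (h05 : B (e 0) (e 5) = -(e 6))
    (h00 : B (e 0) (e 0) = b00 • e 6)
    (h01 : B (e 0) (e 1) = -(e 2) + b01 • e 6)
    (h11 : B (e 1) (e 1) = b11 • e 6)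
    (h12 : B (e 1) (e 2) = a14 • e 4 + a15 • e 5 + b12 • e 6)
    (h21 : B (e 2) (e 1) = -(a14 • e 4 + a15 • e 5 + b12 • e 6))
    (h13 : B (e 1) (e 3) = a14 • e 5 + b13 • e 6)
    (h31 : B (e 3) (e 1) = -(a14 • e 5 + b13 • e 6))
    (h14 : B (e 1) (e 4) = (-a25) • e 5 + b14 • e 6)
    (h41 : B (e 4) (e 1) = -((-a25) • e 5 + b14 • e 6))
    (h23 : B (e 2) (e 3) = a25 • e 5 + b23 • e 6)
    (h32 : B (e 3) (e 2) = -(a25 • e 5 + b23 • e 6))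
    (h15 : B (e 1) (e 5) = b15 • e 6)
    (h51 : B (e 5) (e 1) = -(b15 • e 6))
    (h24 : B (e 2) (e 4) = b24 • e 6)
    (h42 : B (e 4) (e 2) = -(b24 • e 6))
    (h22 : B (e 2) (e 2) = 0) (h33 : B (e 3) (e 3) = 0)
    (h44 : B (e 4) (e 4) = 0) (h55 : B (e 5) (e 5) = 0)
    (h25 : B (e 2) (e 5) = 0) (h52 : B (e 5) (e 2) = 0)
    (h34 : B (e 3) (e 4) = 0) (h43 : B (e 4) (e 3) = 0)
    (h35 : B (e 3) (e 5) = 0) (h53 : B (e 5) (e 3) = 0)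
    (h45 : B (e 4) (e 5) = 0) (h54 : B (e 5) (e 4) = 0)
    (h6 : ∀ j : Fin 7, B (e 6) (e j) = 0 ∧ B (e j) (e 6) = 0)
    (hleib : ∀ i j k : Fin 7,
      B (e i) (B (e j) (e k)) = B (B (e i) (e j)) (e k) - B (B (e i) (e k)) (e j)) :
    b13 = a15 ∧ b14 = a14 - b23 ∧ b15 = 0 ∧ b24 = 0 ∧ a25 = 0 :=
  TLb7_constraints_general B e b01 a14 a15 a25 b12 b13 b14 b23 b15 b24 h02 h03 h04 h05 h01 h12 h13
    h31 h14 h41 h23 h15 h51 h24 h42 h22 h33 h52 h43 h53 h6 hleib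
end

section
/- In an 8-dimensional algebra from the class TLb_8 (multiplication table as defined), if the Leibniz identity holds for all triples of basis vectors, then b_{13}=a_{16}, b_{14}=a_{15}-b_{23}, b_{24}=a_{26}, b_{15}=a_{14}-2a_{26}, and b_{34}(a_{26}+2a_{14})=0. -/
/-!
Each constraint is read off the `e 7`-coordinate of a single instance of the Leibniz identity:
the triples `(0,1,2)`, `(0,1,3)` and `(0,2,3)` give the first three, `(0,1,4)` gives
`b₂₄ + b₁₅ = a₁₄ - a₂₆`, hence the fourth with the third, and `(1,2,3)` gives the last.
-/

namespace TLb8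

variable {R L : Type*} [CommRing R] [AddCommGroup L] [Module R L]
  (B : L →ₗ[R] L →ₗ[R] L) (e : Module.Basis (Fin 8) R L)

theorem b13_eq_a16 {b01 a14 a15 a16 b12 b13 : R}
    (h01 : B (e 0) (e 1) = -(e 2) + b01 • e 7)
    (h02 : B (e 0) (e 2) = -(e 3))
    (h04 : B (e 0) (e 4) = -(e 5)) (h05 : B (e 0) (e 5) = -(e 6))
    (h06 : B (e 0) (e 6) = -(e 7)) (h07 : B (e 0) (e 7) = 0)
    (h12 : B (e 1) (e 2) = a14 • e 4 + a15 • e 5 + a16 • e 6 + b12 • e 7)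
    (h31 : B (e 3) (e 1) = -(a14 • e 5 + a15 • e 6 + b13 • e 7))
    (h22 : B (e 2) (e 2) = 0) (h72 : B (e 7) (e 2) = 0)
    (hleib : B (e 0) (B (e 1) (e 2)) = B (B (e 0) (e 1)) (e 2) - B (B (e 0) (e 2)) (e 1)) :
    b13 = a16 := by
  have h := congrArg (e.coord 7) hleib
  simp only [h01, h02, h04, h05, h06, h07, h12, h31, h22, h72, map_add, map_sub, map_neg,
    map_smul, map_zero, LinearMap.add_apply, LinearMap.neg_apply, LinearMap.smul_apply, smul_zero,
    smul_neg, Module.Basis.coord_apply, Module.Basis.repr_self_apply, Fin.reduceEq, if_true,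
    if_false, smul_eq_mul, mul_one] at h
  linear_combination h

theorem b14_add_b23_eq_a15 {b01 a14 a15 a26 b13 b14 b23 : R}
    (h01 : B (e 0) (e 1) = -(e 2) + b01 • e 7)
    (h03 : B (e 0) (e 3) = -(e 4))
    (h05 : B (e 0) (e 5) = -(e 6)) (h06 : B (e 0) (e 6) = -(e 7))
    (h07 : B (e 0) (e 7) = 0)
    (h13 : B (e 1) (e 3) = a14 • e 5 + a15 • e 6 + b13 • e 7)
    (h23 : B (e 2) (e 3) = a26 • e 6 + b23 • e 7)
    (h41 : B (e 4) (e 1) = -((a14 - a26) • e 6 + b14 • e 7))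
    (h73 : B (e 7) (e 3) = 0)
    (hleib : B (e 0) (B (e 1) (e 3)) = B (B (e 0) (e 1)) (e 3) - B (B (e 0) (e 3)) (e 1)) :
    b14 + b23 = a15 := by
  have h := congrArg (e.coord 7) hleib
  simp only [h01, h03, h05, h06, h07, h13, h23, h41, h73, map_add, map_sub, map_neg, map_smul,
    map_zero, LinearMap.add_apply, LinearMap.neg_apply, LinearMap.smul_apply, smul_zero, smul_neg,
    Module.Basis.coord_apply, Module.Basis.repr_self_apply, Fin.reduceEq, if_true, if_false,
    smul_eq_mul, mul_one] at h
  linear_combination h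

theorem b24_eq_a26 {a26 b23 b24 : R}
    (h02 : B (e 0) (e 2) = -(e 3)) (h03 : B (e 0) (e 3) = -(e 4))
    (h06 : B (e 0) (e 6) = -(e 7)) (h07 : B (e 0) (e 7) = 0)
    (h23 : B (e 2) (e 3) = a26 • e 6 + b23 • e 7)
    (h42 : B (e 4) (e 2) = -(b24 • e 7))
    (h33 : B (e 3) (e 3) = 0)
    (hleib : B (e 0) (B (e 2) (e 3)) = B (B (e 0) (e 2)) (e 3) - B (B (e 0) (e 3)) (e 2)) :
    b24 = a26 := by
  have h := congrArg (e.coord 7) hleib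
  simp only [h02, h03, h06, h07, h23, h42, h33, map_add, map_sub, map_neg, map_smul, map_zero,
    LinearMap.neg_apply, smul_zero, smul_neg, Module.Basis.coord_apply,
    Module.Basis.repr_self_apply, if_true, smul_eq_mul, mul_one] at h
  linear_combination h

theorem b24_add_b15_eq_a14_sub_a26 {b01 a14 a26 b14 b15 b24 : R}
    (h01 : B (e 0) (e 1) = -(e 2) + b01 • e 7)
    (h04 : B (e 0) (e 4) = -(e 5))
    (h06 : B (e 0) (e 6) = -(e 7)) (h07 : B (e 0) (e 7) = 0)
    (h14 : B (e 1) (e 4) = (a14 - a26) • e 6 + b14 • e 7)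
    (h24 : B (e 2) (e 4) = b24 • e 7)
    (h51 : B (e 5) (e 1) = -(b15 • e 7))
    (h74 : B (e 7) (e 4) = 0)
    (hleib : B (e 0) (B (e 1) (e 4)) = B (B (e 0) (e 1)) (e 4) - B (B (e 0) (e 4)) (e 1)) :
    b24 + b15 = a14 - a26 := by
  have h := congrArg (e.coord 7) hleib
  simp only [h01, h04, h06, h07, h14, h24, h51, h74, map_add, map_sub, map_neg, map_smul,
    map_zero, LinearMap.add_apply, LinearMap.neg_apply, LinearMap.smul_apply, smul_zero, smul_neg,
    Module.Basis.coord_apply, Module.Basis.repr_self_apply, if_true, smul_eq_mul, mul_one] at h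
  linear_combination h

theorem b34_mul_a26_add_two_mul_a14_eq_zero {a14 a15 a16 a26 b12 b13 b23 b34 : R}
    (h12 : B (e 1) (e 2) = a14 • e 4 + a15 • e 5 + a16 • e 6 + b12 • e 7)
    (h13 : B (e 1) (e 3) = a14 • e 5 + a15 • e 6 + b13 • e 7)
    (h16 : B (e 1) (e 6) = (-b34) • e 7) (h17 : B (e 1) (e 7) = 0)
    (h23 : B (e 2) (e 3) = a26 • e 6 + b23 • e 7)
    (h43 : B (e 4) (e 3) = -((-b34) • e 7))
    (h52 : B (e 5) (e 2) = -(b34 • e 7))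
    (h53 : B (e 5) (e 3) = 0) (h62 : B (e 6) (e 2) = 0) (h63 : B (e 6) (e 3) = 0)
    (h72 : B (e 7) (e 2) = 0) (h73 : B (e 7) (e 3) = 0)
    (hleib : B (e 1) (B (e 2) (e 3)) = B (B (e 1) (e 2)) (e 3) - B (B (e 1) (e 3)) (e 2)) :
    b34 * (a26 + 2 * a14) = 0 := by
  have h := congrArg (e.coord 7) hleib
  simp only [h12, h13, h16, h17, h23, h43, h52, h53, h62, h63, h72, h73, map_add, map_sub,
    map_neg, map_smul, map_zero, LinearMap.add_apply, LinearMap.smul_apply, smul_zero, smul_neg,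
    Module.Basis.coord_apply, Module.Basis.repr_self_apply, if_true, smul_eq_mul, mul_one] at h
  linear_combination -h

end TLb8

theorem TLb8_constraints_general {L : Type*} [AddCommGroup L] [Module ℂ L]
    (B : L →ₗ[ℂ] L →ₗ[ℂ] L) (e : Module.Basis (Fin 8) ℂ L)
    (b01 a14 a15 a16 a26 b12 b13 b14 b15 b23 b24 b34 : ℂ)
    (h02 : B (e 0) (e 2) = -(e 3))
    (h03 : B (e 0) (e 3) = -(e 4))
    (h04 : B (e 0) (e 4) = -(e 5))
    (h05 : B (e 0) (e 5) = -(e 6))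
    (h06 : B (e 0) (e 6) = -(e 7))
    (h01 : B (e 0) (e 1) = -(e 2) + b01 • e 7)
    (h12 : B (e 1) (e 2) = a14 • e 4 + a15 • e 5 + a16 • e 6 + b12 • e 7)
    (h13 : B (e 1) (e 3) = a14 • e 5 + a15 • e 6 + b13 • e 7)
    (h31 : B (e 3) (e 1) = -(a14 • e 5 + a15 • e 6 + b13 • e 7))
    (h14 : B (e 1) (e 4) = (a14 - a26) • e 6 + b14 • e 7)
    (h41 : B (e 4) (e 1) = -((a14 - a26) • e 6 + b14 • e 7))
    (h51 : B (e 5) (e 1) = -(b15 • e 7))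
    (h23 : B (e 2) (e 3) = a26 • e 6 + b23 • e 7)
    (h24 : B (e 2) (e 4) = b24 • e 7)
    (h42 : B (e 4) (e 2) = -(b24 • e 7))
    (h43 : B (e 4) (e 3) = -((-b34) • e 7))
    (h16 : B (e 1) (e 6) = (-b34) • e 7)
    (h52 : B (e 5) (e 2) = -(b34 • e 7))
    (h22 : B (e 2) (e 2) = 0) (h33 : B (e 3) (e 3) = 0)
    (h62 : B (e 6) (e 2) = 0)
    (h53 : B (e 5) (e 3) = 0)
    (h63 : B (e 6) (e 3) = 0)
    (h7 : ∀ j : Fin 8, B (e 7) (e j) = 0 ∧ B (e j) (e 7) = 0)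
    (hleib : ∀ i j k : Fin 8,
      B (e i) (B (e j) (e k)) = B (B (e i) (e j)) (e k) - B (B (e i) (e k)) (e j)) :
    b13 = a16 ∧ b14 = a15 - b23 ∧ b24 = a26 ∧ b15 = a14 - 2 * a26 ∧
      b34 * (a26 + 2 * a14) = 0 := by
  obtain ⟨h7x, hx7⟩ := forall_and.mp h7
  have hb13 := TLb8.b13_eq_a16 B e h01 h02 h04 h05 h06 (hx7 0) h12 h31 h22 (h7x 2) (hleib 0 1 2)
  have hb14 := TLb8.b14_add_b23_eq_a15 B e h01 h03 h05 h06 (hx7 0) h13 h23 h41 (h7x 3)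
    (hleib 0 1 3)
  have hb24 := TLb8.b24_eq_a26 B e h02 h03 h06 (hx7 0) h23 h42 h33 (hleib 0 2 3)
  have hb15 := TLb8.b24_add_b15_eq_a14_sub_a26 B e h01 h04 h06 (hx7 0) h14 h24 h51 (h7x 4)
    (hleib 0 1 4)
  have hb34 := TLb8.b34_mul_a26_add_two_mul_a14_eq_zero B e h12 h13 h16 (hx7 1) h23 h43 h52 h53
    h62 h63 (h7x 2) (h7x 3) (hleib 1 2 3)
  exact ⟨hb13, eq_sub_of_add_eq hb14, hb24, by linear_combination hb15 - hb24, hb34⟩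

/-- In an algebra from TLb₈, if the Leibniz identity holds for all triples of
basis vectors, then b₁₃ = a₁₆, b₁₄ = a₁₅ - b₂₃, b₂₄ = a₂₆, b₁₅ = a₁₄ - 2a₂₆
and b₃₄(a₂₆ + 2a₁₄) = 0. -/
theorem TLb8_constraints {L : Type*} [AddCommGroup L] [Module ℂ L]
    (B : L →ₗ[ℂ] L →ₗ[ℂ] L) (e : Module.Basis (Fin 8) ℂ L)
    (b00 b01 b11 a14 a15 a16 a26 b12 b13 b14 b15 b23 b24 b34 : ℂ)
    (h10 : B (e 1) (e 0) = e 2)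
    (h20 : B (e 2) (e 0) = e 3)
    (h30 : B (e 3) (e 0) = e 4)
    (h40 : B (e 4) (e 0) = e 5)
    (h50 : B (e 5) (e 0) = e 6)
    (h60 : B (e 6) (e 0) = e 7)
    (h02 : B (e 0) (e 2) = -(e 3))
    (h03 : B (e 0) (e 3) = -(e 4))
    (h04 : B (e 0) (e 4) = -(e 5))
    (h05 : B (e 0) (e 5) = -(e 6))
    (h06 : B (e 0) (e 6) = -(e 7))
    (h00 : B (e 0) (e 0) = b00 • e 7)
    (h01 : B (e 0) (e 1) = -(e 2) + b01 • e 7)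
    (h11 : B (e 1) (e 1) = b11 • e 7)
    (h12 : B (e 1) (e 2) = a14 • e 4 + a15 • e 5 + a16 • e 6 + b12 • e 7)
    (h21 : B (e 2) (e 1) = -(a14 • e 4 + a15 • e 5 + a16 • e 6 + b12 • e 7))
    (h13 : B (e 1) (e 3) = a14 • e 5 + a15 • e 6 + b13 • e 7)
    (h31 : B (e 3) (e 1) = -(a14 • e 5 + a15 • e 6 + b13 • e 7))
    (h14 : B (e 1) (e 4) = (a14 - a26) • e 6 + b14 • e 7)
    (h41 : B (e 4) (e 1) = -((a14 - a26) • e 6 + b14 • e 7))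
    (h15 : B (e 1) (e 5) = b15 • e 7)
    (h51 : B (e 5) (e 1) = -(b15 • e 7))
    (h23 : B (e 2) (e 3) = a26 • e 6 + b23 • e 7)
    (h32 : B (e 3) (e 2) = -(a26 • e 6 + b23 • e 7))
    (h24 : B (e 2) (e 4) = b24 • e 7)
    (h42 : B (e 4) (e 2) = -(b24 • e 7))
    (h34 : B (e 3) (e 4) = (-b34) • e 7)
    (h43 : B (e 4) (e 3) = -((-b34) • e 7))
    (h16 : B (e 1) (e 6) = (-b34) • e 7)
    (h61 : B (e 6) (e 1) = -((-b34) • e 7))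
    (h25 : B (e 2) (e 5) = b34 • e 7)
    (h52 : B (e 5) (e 2) = -(b34 • e 7))
    (h22 : B (e 2) (e 2) = 0) (h33 : B (e 3) (e 3) = 0)
    (h44 : B (e 4) (e 4) = 0) (h55 : B (e 5) (e 5) = 0)
    (h66 : B (e 6) (e 6) = 0)
    (h26 : B (e 2) (e 6) = 0) (h62 : B (e 6) (e 2) = 0)
    (h35 : B (e 3) (e 5) = 0) (h53 : B (e 5) (e 3) = 0)
    (h36 : B (e 3) (e 6) = 0) (h63 : B (e 6) (e 3) = 0)
    (h45 : B (e 4) (e 5) = 0) (h54 : B (e 5) (e 4) = 0)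
    (h46 : B (e 4) (e 6) = 0) (h64 : B (e 6) (e 4) = 0)
    (h56 : B (e 5) (e 6) = 0) (h65 : B (e 6) (e 5) = 0)
    (h7 : ∀ j : Fin 8, B (e 7) (e j) = 0 ∧ B (e j) (e 7) = 0)
    (hleib : ∀ i j k : Fin 8,
      B (e i) (B (e j) (e k)) = B (B (e i) (e j)) (e k) - B (B (e i) (e k)) (e j)) :
    b13 = a16 ∧ b14 = a15 - b23 ∧ b24 = a26 ∧ b15 = a14 - 2 * a26 ∧
      b34 * (a26 + 2 * a14) = 0 :=
  TLb8_constraints_general B e b01 a14 a15 a16 a26 b12 b13 b14 b15 b23 b24 b34 h02 h03 h04 h05 h06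
    h01 h12 h13 h31 h14 h41 h51 h23 h24 h42 h43 h16 h52 h22 h33 h62 h53 h63 h7 hleib
end

section
/- Let (c_{00},c_{01},c_{11},c_{12},c_{13},c_{14},c_{23}) and (c'_{00},c'_{01},c'_{11},c'_{12},c'_{13},c'_{14},c'_{23}) be tuples of complex numbers related by the base-change formulas of the isomorphism criterion for TLb_7 with A_0 B_1 ≠ 0, and assume c_{23} ≠ 0, c_{11} ≠ 0, c_{12} ≠ 0. Then (c'_{23}/c'_{11})^8 (4c'_{00}c'_{11} - c'^2_{01})^3 = (c_{23}/c_{11})^8 (4c_{00}c_{11} - c^2_{01})^3 and c'_{12}/c'_{23} = c_{12}/c_{23}. -/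
/-!
Up to the scalars `B1 / A0^5` and `1 / A0^5`, the triple `(c00', c01', c11')` is the quadratic form
`c00 X² + c01 XY + c11 Y²` after the substitution `(X, Y) ↦ (A0 X, A1 X + Y)`, of determinant `A0`.
Hence `Δ₁ = 4 c00 c11 - c01²` gets divided by `A0⁸`, while `c23 / c11` gets multiplied by `A0³`,
so `(c23 / c11)⁸ Δ₁³` is invariant; `c12` and `c23` are both scaled by `B1 / A0²`.
-/

section BaseChange

variable {K : Type*} [Field K] {A0 B1 : K}

theorem discrim_substitution {R : Type*} [CommRing R] (A0 A1 c00 c01 c11 : R) :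
    4 * (A0^2 * c00 + A0 * A1 * c01 + A1^2 * c11) * c11 - (A0 * c01 + 2 * A1 * c11)^2
      = A0^2 * (4 * c00 * c11 - c01^2) := by
  ring

theorem discrim_baseChange (hA0 : A0 ≠ 0) (hB1 : B1 ≠ 0) (A1 c00 c01 c11 : K) :
    4 * ((A0^2 * c00 + A0 * A1 * c01 + A1^2 * c11) / (A0^5 * B1)) * (B1 * c11 / A0^5)
        - ((A0 * c01 + 2 * A1 * c11) / A0^5)^2
      = (4 * c00 * c11 - c01^2) / A0^8 := by
  have h := discrim_substitution A0 A1 c00 c01 c11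
  field_simp
  linear_combination A0 ^ 2 * h

theorem div_baseChange_eq_pow_three_mul (hA0 : A0 ≠ 0) (hB1 : B1 ≠ 0) (c11 c23 : K) :
    B1 * c23 / A0^2 / (B1 * c11 / A0^5) = A0^3 * (c23 / c11) := by
  field_simp

theorem div_div_div_scale_cancel (hA0 : A0 ≠ 0) (hB1 : B1 ≠ 0) (c12 c23 : K) :
    B1 * c12 / A0^2 / (B1 * c23 / A0^2) = c12 / c23 := by
  field_simp

end BaseChange

theorem TLb7_U1_invariants_general (A0 A1 B1 : ℂ)
    (c00 c01 c11 c12 c23 c00' c01' c11' c12' c23' : ℂ)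
    (hA : A0 * B1 ≠ 0)
    (h00 : c00' = (A0^2 * c00 + A0 * A1 * c01 + A1^2 * c11) / (A0^5 * B1))
    (h01 : c01' = (A0 * c01 + 2 * A1 * c11) / A0^5)
    (h11 : c11' = B1 * c11 / A0^5)
    (h12 : c12' = B1 * c12 / A0^2)
    (h23 : c23' = B1 * c23 / A0^2) :
    (c23' / c11')^8 * (4 * c00' * c11' - c01'^2)^3
      = (c23 / c11)^8 * (4 * c00 * c11 - c01^2)^3 ∧
    c12' / c23' = c12 / c23 := by
  obtain ⟨hA0, hB1⟩ := mul_ne_zero_iff.mp hA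
  subst h00 h01 h11 h12 h23
  refine ⟨?_, div_div_div_scale_cancel hA0 hB1 c12 c23⟩
  rw [div_baseChange_eq_pow_three_mul hA0 hB1, discrim_baseChange hA0 hB1]
  field_simp

/-- Invariance of the functions (c₂₃/c₁₁)⁸Δ₁³ and c₁₂/c₂₃ under the adapted
base change in TLb₇, on the subset c₂₃ ≠ 0, c₁₁ ≠ 0, c₁₂ ≠ 0. -/
theorem TLb7_U1_invariants (A0 A1 B1 B2 B3 : ℂ)
    (c00 c01 c11 c12 c13 c14 c23 c00' c01' c11' c12' c13' c14' c23' : ℂ)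
    (hA : A0 * B1 ≠ 0)
    (h00 : c00' = (A0^2 * c00 + A0 * A1 * c01 + A1^2 * c11) / (A0^5 * B1))
    (h01 : c01' = (A0 * c01 + 2 * A1 * c11) / A0^5)
    (h11 : c11' = B1 * c11 / A0^5)
    (h12 : c12' = B1 * c12 / A0^2)
    (h13 : c13' = (B1 * c13 + B2 * c12) / A0^3)
    (h14 : c14' = (1 / (A0^5 * B1)) *
      (A0 * B1^2 * c14 + B2 * (A0 * B1 * c13 + A1 * B1 * c12 * c23 + A0 * B2 * c23
        - A1 * B1 * c12^2) - B3 * (2 * A0 * B1 * c23 - A0 * B1 * c12)))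
    (h23 : c23' = B1 * c23 / A0^2)
    (hc23 : c23 ≠ 0) (hc11 : c11 ≠ 0) (hc12 : c12 ≠ 0) :
    (c23' / c11')^8 * (4 * c00' * c11' - c01'^2)^3
      = (c23 / c11)^8 * (4 * c00 * c11 - c01^2)^3 ∧
    c12' / c23' = c12 / c23 :=
  TLb7_U1_invariants_general A0 A1 B1 c00 c01 c11 c12 c23 c00' c01' c11' c12' c23' hA h00 h01 h11
    h12 h23
end

section
/- Suppose c_{23} ≠ 0, c_{11} = 0, c_{01} ≠ 0, c_{12} = c_{13} = 0 (the subset U_7^6 of TLb_7). Then there exist A_0, A_1, B_1, B_2, B_3 ∈ ℂ with A_0 B_1 ≠ 0 such that the base-change formulas for TLb_7 send the structure constants (c_{00},c_{01},0,0,0,c_{14},c_{23}) to (0,1,0,0,0,0,1). In particular one may take A_0 with A_0⁴ = c_{01}, A_1 = -A_0 c_{00}/c_{01}, and B_1 with B_1² = c_{01}/c_{23}², choosing B_3 appropriately. -/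
/-- The subset U₇⁶ (c₂₃ ≠ 0, c₁₁ = 0, c₀₁ ≠ 0, c₁₂ = c₁₃ = 0) is a single
orbit: there is an adapted base change taking (c₀₀,c₀₁,0,0,0,c₁₄,c₂₃) to
(0,1,0,0,0,0,1), with A₀⁴ = c₀₁, A₁ = -A₀c₀₀/c₀₁ and B₁² = c₀₁/c₂₃². -/
theorem TLb7_U6_single_orbit (c00 c01 c14 c23 : ℂ)
    (hc23 : c23 ≠ 0) (hc01 : c01 ≠ 0) :
    ∃ A0 A1 B1 B2 B3 : ℂ, A0 * B1 ≠ 0 ∧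
      A0^4 = c01 ∧
      A1 = -A0 * c00 / c01 ∧
      B1^2 = c01 / c23^2 ∧
      (A0^2 * c00 + A0 * A1 * c01 + A1^2 * 0) / (A0^5 * B1) = 0 ∧
      (A0 * c01 + 2 * A1 * 0) / A0^5 = 1 ∧
      B1 * 0 / A0^5 = 0 ∧
      B1 * 0 / A0^2 = 0 ∧
      (B1 * 0 + B2 * 0) / A0^3 = 0 ∧
      (1 / (A0^5 * B1)) *
        (A0 * B1^2 * c14 + B2 * (A0 * B1 * 0 + A1 * B1 * 0 * c23 + A0 * B2 * c23
          - A1 * B1 * 0^2) - B3 * (2 * A0 * B1 * c23 - A0 * B1 * 0)) = 0 ∧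
      B1 * c23 / A0^2 = 1 := by
  set A0 : ℂ := c01 ^ ((4 : ℕ)⁻¹ : ℂ) with hA0def
  have hA04 : A0 ^ 4 = c01 := by
    exact_mod_cast Complex.cpow_nat_inv_pow c01 (by norm_num : (4:ℕ) ≠ 0)
  have hA0 : A0 ≠ 0 := by
    intro h
    apply hc01
    rw [← hA04, h]; ring
  refine ⟨A0, -A0 * c00 / c01, A0^2 / c23, 0, (A0^2 / c23) * c14 / (2 * c23),
    mul_ne_zero hA0 (div_ne_zero (pow_ne_zero _ hA0) hc23), hA04, rfl, ?_, ?_, ?_, ?_, ?_, ?_, ?_, ?_⟩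
  · field_simp
    rw [← hA04]
  · field_simp
    ring
  · rw [← hA04]; field_simp
    ring
  · simp
  · simp
  · simp
  · field_simp
    ring
  · field_simp
end

section
/- Let the primed and unprimed tuples be related by the base-change formulas of the isomorphism criterion for TLb_8 with A_0B_1 ≠ 0 and A_0 + A_1c_{34} ≠ 0, and assume c_{34} ≠ 0, c_{11} ≠ 0, c_{12} = 0, c_{23} = 0, c_{13} ≠ 0. Then c'^5_{13}(2c'_{11} - c'_{01}c'_{34})^5 / (c'^7_{11}c'^3_{34}) = c^5_{13}(2c_{11} - c_{01}c_{34})^5 / (c^7_{11}c^3_{34}). -/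
/-! Under the base change each of `c₁₃`, `2c₁₁ - c₀₁c₃₄`, `c₁₁`, `c₃₄` is multiplied by a
nonzero factor, namely `B₁/A₀³`, `B₁/(A₀⁴D²)`, `B₁/(A₀⁵D)` and `B₁/D` with `D = A₀ + A₁c₃₄`.
The exponents `5, 5, 7, 3` are chosen so that these factors cancel in the quotient:
both numerator and denominator pick up `B₁¹⁰/(A₀³⁵D¹⁰)`. -/

theorem mul_pow_mul_div_mul_pow_mul_eq {K : Type*} [Field K] (a b c d x y u v : K)
    (m n p q : ℕ) (hweight : a ^ m * b ^ n = c ^ p * d ^ q) (hne : c ^ p * d ^ q ≠ 0) :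
    (a * x) ^ m * (b * y) ^ n / ((c * u) ^ p * (d * v) ^ q)
      = x ^ m * y ^ n / (u ^ p * v ^ q) := by
  calc (a * x) ^ m * (b * y) ^ n / ((c * u) ^ p * (d * v) ^ q)
      = (a ^ m * b ^ n) * (x ^ m * y ^ n) / ((c ^ p * d ^ q) * (u ^ p * v ^ q)) := by ring
    _ = x ^ m * y ^ n / (u ^ p * v ^ q) := by rw [hweight, mul_div_mul_left _ _ hne]

theorem TLb8_U6_invariant_general (A0 A1 B1 : ℂ)
    (c01 c11 c13 c34 c01' c11' c13' c34' : ℂ)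
    (hA : A0 * B1 ≠ 0) (hden : A0 + A1 * c34 ≠ 0)
    (h01 : c01' = (A0 * c01 + 2 * A1 * c11) / (A0^5 * (A0 + A1 * c34)))
    (h11 : c11' = B1 * c11 / (A0^5 * (A0 + A1 * c34)))
    (h13 : c13' = B1 * c13 / A0^3)
    (h34 : c34' = B1 * c34 / (A0 + A1 * c34)) :
    c13'^5 * (2 * c11' - c01' * c34')^5 / (c11'^7 * c34'^3)
      = c13^5 * (2 * c11 - c01 * c34)^5 / (c11^7 * c34^3) := by
  obtain ⟨hA0, hB1⟩ := mul_ne_zero_iff.mp hA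
  set D := A0 + A1 * c34
  have e13 : c13' = B1 / A0 ^ 3 * c13 := by rw [h13]; ring
  have e11 : c11' = B1 / (A0 ^ 5 * D) * c11 := by rw [h11]; ring
  have e34 : c34' = B1 / D * c34 := by rw [h34]; ring
  have eX : 2 * c11' - c01' * c34' = B1 / (A0 ^ 4 * D ^ 2) * (2 * c11 - c01 * c34) := by
    rw [h01, h11, h34]; field_simp; ring
  rw [e13, eX, e11, e34]
  apply mul_pow_mul_div_mul_pow_mul_eq
  · field_simp
  · simp [hA0, hB1, hden]

/-- Invariance of c₁₃⁵(2c₁₁ - c₀₁c₃₄)⁵/(c₁₁⁷c₃₄³) under the TLb₈ base change on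
the subset c₃₄ ≠ 0, c₁₁ ≠ 0, c₁₂ = 0, c₂₃ = 0, c₁₃ ≠ 0. -/
theorem TLb8_U6_invariant (A0 A1 B1 : ℂ)
    (c01 c11 c12 c13 c23 c34 c01' c11' c13' c34' : ℂ)
    (hA : A0 * B1 ≠ 0) (hden : A0 + A1 * c34 ≠ 0)
    (h01 : c01' = (A0 * c01 + 2 * A1 * c11) / (A0^5 * (A0 + A1 * c34)))
    (h11 : c11' = B1 * c11 / (A0^5 * (A0 + A1 * c34)))
    (h13 : c13' = B1 * c13 / A0^3)
    (h34 : c34' = B1 * c34 / (A0 + A1 * c34))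
    (hc34 : c34 ≠ 0) (hc11 : c11 ≠ 0) (hc12 : c12 = 0) (hc23 : c23 = 0)
    (hc13 : c13 ≠ 0) :
    c13'^5 * (2 * c11' - c01' * c34')^5 / (c11'^7 * c34'^3)
      = c13^5 * (2 * c11 - c01 * c34)^5 / (c11^7 * c34^3) :=
  TLb8_U6_invariant_general A0 A1 B1 c01 c11 c13 c34 c01' c11' c13' c34' hA hden h01 h11 h13 h34
end

section
/- Let the primed and unprimed 7-tuples be related by the base-change formulas for TLb_7 with A_0B_1 ≠ 0, and assume c_{23} = 0, c_{11} ≠ 0, c_{12} ≠ 0 (subset U_7^13). Then (c'_{12}/c'_{11})^8 (4c'_{00}c'_{11} - c'^2_{01})^3 = (c_{12}/c_{11})^8 (4c_{00}c_{11} - c^2_{01})^3, i.e., the function f(C) = (c_{12}/c_{11})^8 (4c_{00}c_{11}-c_{01}²)³ is invariant under the base change on this subset. -/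
/-!
The base change multiplies the ratio `c₁₂ / c₁₁` by `A₀³` and the discriminant
`4 c₀₀ c₁₁ - c₀₁²` of the binary form `c₀₀ x² + c₀₁ x y + c₁₁ y²` by `A₀⁻⁸`: the substitution
`x ↦ A₀ x, y ↦ A₁ x + y` multiplies it by `A₀²`, and the rescaling of the three coefficients
divides it by `A₀¹⁰`. In `f` the factors `A₀²⁴` and `A₀⁻²⁴` cancel.
-/

section BaseChange

variable {K : Type*} [Field K] {A0 B1 : K}

theorem baseChange_ratio (hA0 : A0 ≠ 0) (hB1 : B1 ≠ 0) (c11 c12 : K) :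
    (B1 * c12 / A0 ^ 2) / (B1 * c11 / A0 ^ 5) = A0 ^ 3 * (c12 / c11) := by
  rcases eq_or_ne c11 0 with rfl | hc11
  · simp
  · field_simp

theorem baseChange_discr (hA0 : A0 ≠ 0) (hB1 : B1 ≠ 0) (A1 c00 c01 c11 : K) :
    4 * ((A0 ^ 2 * c00 + A0 * A1 * c01 + A1 ^ 2 * c11) / (A0 ^ 5 * B1)) * (B1 * c11 / A0 ^ 5)
        - ((A0 * c01 + 2 * A1 * c11) / A0 ^ 5) ^ 2
      = (4 * c00 * c11 - c01 ^ 2) / A0 ^ 8 := by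
  field_simp
  ring

end BaseChange

theorem TLb7_U13_invariant_general (A0 A1 B1 : ℂ)
    (c00 c01 c11 c12 c00' c01' c11' c12' : ℂ)
    (hA : A0 * B1 ≠ 0)
    (h00 : c00' = (A0^2 * c00 + A0 * A1 * c01 + A1^2 * c11) / (A0^5 * B1))
    (h01 : c01' = (A0 * c01 + 2 * A1 * c11) / A0^5)
    (h11 : c11' = B1 * c11 / A0^5)
    (h12 : c12' = B1 * c12 / A0^2) :
    (c12' / c11')^8 * (4 * c00' * c11' - c01'^2)^3
      = (c12 / c11)^8 * (4 * c00 * c11 - c01^2)^3 := by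
  obtain ⟨hA0, hB1⟩ := mul_ne_zero_iff.mp hA
  subst h00 h01 h11 h12
  rw [baseChange_ratio hA0 hB1, baseChange_discr hA0 hB1]
  field_simp

/-- Invariance of f(C) = (c₁₂/c₁₁)⁸(4c₀₀c₁₁ - c₀₁²)³ under the TLb₇ base change
on the subset U₇¹³: c₂₃ = 0, c₁₁ ≠ 0, c₁₂ ≠ 0. -/
theorem TLb7_U13_invariant (A0 A1 B1 : ℂ)
    (c00 c01 c11 c12 c23 c00' c01' c11' c12' : ℂ)
    (hA : A0 * B1 ≠ 0)
    (h00 : c00' = (A0^2 * c00 + A0 * A1 * c01 + A1^2 * c11) / (A0^5 * B1))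
    (h01 : c01' = (A0 * c01 + 2 * A1 * c11) / A0^5)
    (h11 : c11' = B1 * c11 / A0^5)
    (h12 : c12' = B1 * c12 / A0^2)
    (hc23 : c23 = 0) (hc11 : c11 ≠ 0) (hc12 : c12 ≠ 0) :
    (c12' / c11')^8 * (4 * c00' * c11' - c01'^2)^3
      = (c12 / c11)^8 * (4 * c00 * c11 - c01^2)^3 :=
  TLb7_U13_invariant_general A0 A1 B1 c00 c01 c11 c12 c00' c01' c11' c12' hA h00 h01 h11 h12
end

section
/- Let the primed and unprimed 7-tuples be related by the base-change formulas for TLb_7 with A_0B_1 ≠ 0, and assume c_{23} ≠ 0, c_{11} = c_{01} = 0, c_{00} ≠ 0, c_{12} = 0, c_{13} ≠ 0 (subset U_7^8). Then c'_{00}c'^6_{23}/c'^5_{13} = c_{00}c^6_{23}/c^5_{13}, i.e., the function f(C) = c_{00}c_{23}⁶/c_{13}⁵ is invariant under the base change on this subset. -/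
/-!
The base change rescales `c₀₀, c₁₃, c₂₃` by `(A₀³B₁)⁻¹, B₁/A₀³, B₁/A₀²`, and
`c₀₀c₂₃⁶/c₁₃⁵` picks up the factor `(A₀³B₁)⁻¹ (B₁/A₀²)⁶ / (B₁/A₀³)⁵ = 1`:
the powers of `A₀` cancel as `-3 - 12 + 15 = 0` and those of `B₁` as `-1 + 6 - 5 = 0`.
-/

theorem mul_mul_pow_six_div_mul_pow_five {K : Type*} [Field K] (x y z s t u : K) :
    x * s * (z * u) ^ 6 / (y * t) ^ 5 = x * z ^ 6 / y ^ 5 * (s * u ^ 6 / t ^ 5) := by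
  rw [mul_pow, mul_pow, ← mul_div_mul_comm]
  ring

theorem TLb7_scale_factor_eq_one {K : Type*} [Field K] {A0 B1 : K} (hA : A0 * B1 ≠ 0) :
    (A0 ^ 3 * B1)⁻¹ * (B1 / A0 ^ 2) ^ 6 / (B1 / A0 ^ 3) ^ 5 = 1 := by
  obtain ⟨hA0, hB1⟩ := mul_ne_zero_iff.mp hA
  field_simp

theorem TLb7_U8_invariant_general (A0 B1 : ℂ)
    (c00 c13 c23 c00' c13' c23' : ℂ)
    (hA : A0 * B1 ≠ 0)
    (h00 : c00' = c00 / (A0^3 * B1))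
    (h13 : c13' = B1 * c13 / A0^3)
    (h23 : c23' = B1 * c23 / A0^2) :
    c00' * c23'^6 / c13'^5 = c00 * c23^6 / c13^5 := by
  have h00' : c00' = c00 * (A0 ^ 3 * B1)⁻¹ := by rw [h00, div_eq_mul_inv]
  have h13' : c13' = c13 * (B1 / A0 ^ 3) := by rw [h13]; ring
  have h23' : c23' = c23 * (B1 / A0 ^ 2) := by rw [h23]; ring
  rw [h00', h13', h23', mul_mul_pow_six_div_mul_pow_five,
    TLb7_scale_factor_eq_one hA, mul_one]

/-- Invariance of f(C) = c₀₀c₂₃⁶/c₁₃⁵ under the TLb₇ base change on the subset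
U₇⁸: c₂₃ ≠ 0, c₁₁ = c₀₁ = 0, c₀₀ ≠ 0, c₁₂ = 0, c₁₃ ≠ 0. -/
theorem TLb7_U8_invariant (A0 A1 B1 : ℂ)
    (c00 c13 c23 c00' c13' c23' : ℂ)
    (hA : A0 * B1 ≠ 0)
    (h00 : c00' = c00 / (A0^3 * B1))
    (h13 : c13' = B1 * c13 / A0^3)
    (h23 : c23' = B1 * c23 / A0^2)
    (hc23 : c23 ≠ 0) (hc00 : c00 ≠ 0) (hc13 : c13 ≠ 0) :
    c00' * c23'^6 / c13'^5 = c00 * c23^6 / c13^5 :=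
  TLb7_U8_invariant_general A0 B1 c00 c13 c23 c00' c13' c23' hA h00 h13 h23
end
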